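/- arXiv:2308.05876 — 6 statements merged into one kernel-verified Lean document; each statement's English description precedes it below -/
import Mathlib

section
/- Let A and B be nonempty types, let F, G : A × B → ℝ, and let w be a nonzero real number. Then the following are equivalent: (i) for all a, a' ∈ A and all b ∈ B, F(a,b) − F(a',b) = w · (G(a,b) − G(a',b)); (ii) there exists a function Θ : B → ℝ such that F(a,b) = w · G(a,b) + Θ(b) for all a ∈ A and b ∈ B. -/
theorem forall_sub_eq_sub_iff_exists_eq_add {A B M : Type*} [Nonempty A] [AddCommGroup M]
    (F H : A × B → M) :
    (∀ (a a' : A) (b : B), F (a, b) - F (a', b) = H (a, b) - H (a', b))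
      ↔ ∃ Θ : B → M, ∀ (a : A) (b : B), F (a, b) = H (a, b) + Θ b := by
  constructor
  · intro h
    obtain ⟨a₀⟩ := ‹Nonempty A›
    refine ⟨fun b => F (a₀, b) - H (a₀, b), fun a b => ?_⟩
    rw [← sub_eq_iff_eq_add', ← sub_eq_sub_iff_sub_eq_sub, h a a₀ b]
  · rintro ⟨Θ, hΘ⟩ a a' b
    rw [hΘ a b, hΘ a' b, add_sub_add_right_eq_sub]

theorem weighted_potential_difference_iff_decomposition_general
    {A B : Type*} [Nonempty A]
    (F G : A × B → ℝ) (w : ℝ) :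
    (∀ (a a' : A) (b : B), F (a, b) - F (a', b) = w * (G (a, b) - G (a', b)))
      ↔ ∃ Θ : B → ℝ, ∀ (a : A) (b : B), F (a, b) = w * G (a, b) + Θ b := by
  simp only [mul_sub]
  exact forall_sub_eq_sub_iff_exists_eq_add F (fun p => w * G p)

/-- The weighted potential difference condition holds for `F` with respect
to `G` and nonzero weight `w` iff `F` decomposes as `w • G` plus a term depending
only on the second variable. -/
theorem weighted_potential_difference_iff_decomposition
    {A B : Type*} [Nonempty A] [Nonempty B]
    (F G : A × B → ℝ) (w : ℝ) (hw : w ≠ 0) :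
    (∀ (a a' : A) (b : B), F (a, b) - F (a', b) = w * (G (a, b) - G (a', b)))
      ↔ ∃ Θ : B → ℝ, ∀ (a : A) (b : B), F (a, b) = w * G (a, b) + Θ b :=
  weighted_potential_difference_iff_decomposition_general F G w
end

section
/- Fix T ≥ 1 and types X₁, U₁, X₂, U₂. For each k ∈ {0,…,T−1} let L¹¹_k : X₁ × U₁ → ℝ, L²²_k : X₂ × U₂ → ℝ, L¹²_k : X₁ × X₂ → ℝ, L²¹_k : X₂ × X₁ → ℝ with L²¹_k(x₂,x₁) = L¹²_k(x₁,x₂) for all x₁,x₂, and similarly terminal costs L¹¹_T : X₁ → ℝ, L²²_T : X₂ → ℝ, L¹²_T : X₁ × X₂ → ℝ, L²¹_T : X₂ × X₁ → ℝ with L²¹_T(x₂,x₁) = L¹²_T(x₁,x₂); let c¹_k > 0, c²_k > 0 for k ∈ {0,…,T}. Define agent 1's total cost J¹ of a trajectory (x¹,x²,u¹,u²) as L¹¹_T(x¹_T) + c¹_T·L¹²_T(x¹_T,x²_T) + Σ_{k<T}[L¹¹_k(x¹_k,u¹_k) + c¹_k·L¹²_k(x¹_k,x²_k)], and the potential P as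 L_T + Σ_{k<T} L_k where L_k = c²_k·L¹¹_k(x¹_k,u¹_k) + c¹_k·L²²_k(x²_k,u²_k) + c¹_k·c²_k·L¹²_k(x¹_k,x²_k) and L_T = c²_T·L¹¹_T(x¹_T) + c¹_T·L²²_T(x²_T) + c¹_T·c²_T·L¹²_T(x¹_T,x²_T). Then for any two trajectories (x¹,x²,u¹,u²) and (x'¹,x²,u'¹,u²) that agree in agent 2's states and actions at every time step, J¹(x¹,x²,u¹,u²) − J¹(x'¹,x²,u'¹,u²) = (1/c²_T)·(L_T(x¹_T,x²_T) − L_T(x'¹_T,x²_T)) + Σ_{k<T} (1/c²_k)·(L_k(x¹_k,x²_k,u¹_k,u²_k) − L_k(x'¹_k,x²_k,u'¹_k,u²_k)); symmetrically, agent 2's total cost J² = L²²_T(x²_T) + c²_T·L²¹_T(x²_T,x¹_T) + Σ_{k<T}[L²²_k(x²_k,u²_k) + c²_k·L²¹_k(x²_k,x¹_k)] satisfies the analogous identity with weights 1/c¹_k when agent 1's components are held fixed. -/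
/-!
The potential stage cost splits as `c²_k · (agent 1's stage cost) + (a term free of agent 1's
variables)`, and, after rewriting `L²¹` as `L¹²`, as `c¹_k · (agent 2's stage cost) + (a term
free of agent 2's variables)`. Hence a unilateral deviation of agent `i` changes each stage
of the potential by exactly `cʲ_k` times the change of its own stage cost; dividing by `cʲ_k`
and summing over the stages gives the identities.
-/

theorem sub_eq_one_div_mul_of_sub_eq_mul {w a a' b b' : ℝ} (hw : w ≠ 0)
    (h : b - b' = w * (a - a')) : a - a' = 1 / w * (b - b') := by
  rw [h, one_div, inv_mul_cancel_left₀ hw]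

theorem Finset.sum_sub_sum_eq_sum_one_div_mul_of_sub_eq_mul {ι : Type*} (s : Finset ι)
    {w a a' b b' : ι → ℝ} (hw : ∀ i ∈ s, w i ≠ 0)
    (h : ∀ i ∈ s, b i - b' i = w i * (a i - a' i)) :
    ∑ i ∈ s, a i - ∑ i ∈ s, a' i = ∑ i ∈ s, 1 / w i * (b i - b' i) := by
  rw [← Finset.sum_sub_distrib]
  exact Finset.sum_congr rfl fun i hi => sub_eq_one_div_mul_of_sub_eq_mul (hw i hi) (h i hi)

theorem dyadic_weighted_potential_game_general
    (T : ℕ) {X₁ U₁ X₂ U₂ : Type*}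
    (L11 : Fin T → X₁ × U₁ → ℝ) (L22 : Fin T → X₂ × U₂ → ℝ)
    (L12 : Fin T → X₁ × X₂ → ℝ) (L21 : Fin T → X₂ × X₁ → ℝ)
    (L11T : X₁ → ℝ) (L22T : X₂ → ℝ) (L12T : X₁ × X₂ → ℝ) (L21T : X₂ × X₁ → ℝ)
    (hsym : ∀ (k : Fin T) (x₁ : X₁) (x₂ : X₂), L21 k (x₂, x₁) = L12 k (x₁, x₂))
    (hsymT : ∀ (x₁ : X₁) (x₂ : X₂), L21T (x₂, x₁) = L12T (x₁, x₂))
    (c₁ c₂ : Fin (T + 1) → ℝ) (hc₁ : ∀ k, 0 < c₁ k) (hc₂ : ∀ k, 0 < c₂ k) :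
    -- total costs
    (∀ (J1 : (Fin (T + 1) → X₁) → (Fin (T + 1) → X₂) → (Fin T → U₁) → (Fin T → U₂) → ℝ),
      (∀ x1 x2 u1 u2, J1 x1 x2 u1 u2 =
        L11T (x1 (Fin.last T)) + c₁ (Fin.last T) * L12T (x1 (Fin.last T), x2 (Fin.last T))
          + ∑ k : Fin T, (L11 k (x1 k.castSucc, u1 k)
              + c₁ k.castSucc * L12 k (x1 k.castSucc, x2 k.castSucc))) →
      ∀ (L : Fin T → X₁ → X₂ → U₁ → U₂ → ℝ) (LT : X₁ → X₂ → ℝ),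
      (∀ k a b p q, L k a b p q =
        c₂ k.castSucc * L11 k (a, p) + c₁ k.castSucc * L22 k (b, q)
          + c₁ k.castSucc * c₂ k.castSucc * L12 k (a, b)) →
      (∀ a b, LT a b =
        c₂ (Fin.last T) * L11T a + c₁ (Fin.last T) * L22T b
          + c₁ (Fin.last T) * c₂ (Fin.last T) * L12T (a, b)) →
      -- agent 1's unilateral deviations
      (∀ (x1 x1' : Fin (T + 1) → X₁) (x2 : Fin (T + 1) → X₂)
          (u1 u1' : Fin T → U₁) (u2 : Fin T → U₂),
        J1 x1 x2 u1 u2 - J1 x1' x2 u1' u2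
          = (1 / c₂ (Fin.last T)) * (LT (x1 (Fin.last T)) (x2 (Fin.last T))
              - LT (x1' (Fin.last T)) (x2 (Fin.last T)))
            + ∑ k : Fin T, (1 / c₂ k.castSucc)
                * (L k (x1 k.castSucc) (x2 k.castSucc) (u1 k) (u2 k)
                   - L k (x1' k.castSucc) (x2 k.castSucc) (u1' k) (u2 k))))
    ∧
    (∀ (J2 : (Fin (T + 1) → X₁) → (Fin (T + 1) → X₂) → (Fin T → U₁) → (Fin T → U₂) → ℝ),
      (∀ x1 x2 u1 u2, J2 x1 x2 u1 u2 =
        L22T (x2 (Fin.last T)) + c₂ (Fin.last T) * L21T (x2 (Fin.last T), x1 (Fin.last T))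
          + ∑ k : Fin T, (L22 k (x2 k.castSucc, u2 k)
              + c₂ k.castSucc * L21 k (x2 k.castSucc, x1 k.castSucc))) →
      ∀ (L : Fin T → X₁ → X₂ → U₁ → U₂ → ℝ) (LT : X₁ → X₂ → ℝ),
      (∀ k a b p q, L k a b p q =
        c₂ k.castSucc * L11 k (a, p) + c₁ k.castSucc * L22 k (b, q)
          + c₁ k.castSucc * c₂ k.castSucc * L12 k (a, b)) →
      (∀ a b, LT a b =
        c₂ (Fin.last T) * L11T a + c₁ (Fin.last T) * L22T b
          + c₁ (Fin.last T) * c₂ (Fin.last T) * L12T (a, b)) →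
      -- agent 2's unilateral deviations
      (∀ (x1 : Fin (T + 1) → X₁) (x2 x2' : Fin (T + 1) → X₂)
          (u1 : Fin T → U₁) (u2 u2' : Fin T → U₂),
        J2 x1 x2 u1 u2 - J2 x1 x2' u1 u2'
          = (1 / c₁ (Fin.last T)) * (LT (x1 (Fin.last T)) (x2 (Fin.last T))
              - LT (x1 (Fin.last T)) (x2' (Fin.last T)))
            + ∑ k : Fin T, (1 / c₁ k.castSucc)
                * (L k (x1 k.castSucc) (x2 k.castSucc) (u1 k) (u2 k)
                   - L k (x1 k.castSucc) (x2' k.castSucc) (u1 k) (u2' k)))) := by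
  constructor
  · intro J1 hJ1 L LT hL hLT x1 x1' x2 u1 u1' u2
    rw [hJ1, hJ1, add_sub_add_comm]
    congr 1
    · exact sub_eq_one_div_mul_of_sub_eq_mul (hc₂ _).ne' (by simp only [hLT]; ring)
    · exact Finset.sum_sub_sum_eq_sum_one_div_mul_of_sub_eq_mul _ (fun k _ => (hc₂ _).ne')
        fun k _ => by simp only [hL]; ring
  · intro J2 hJ2 L LT hL hLT x1 x2 x2' u1 u2 u2'
    rw [hJ2, hJ2, add_sub_add_comm]
    congr 1
    · exact sub_eq_one_div_mul_of_sub_eq_mul (hc₁ _).ne' (by simp only [hLT, hsymT]; ring)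
    · exact Finset.sum_sub_sum_eq_sum_one_div_mul_of_sub_eq_mul _ (fun k _ => (hc₁ _).ne')
        fun k _ => by simp only [hL, hsym]; ring

/-- Lemma 3 of the paper: a dyadic interaction with stage-wise costs
`Lⁱ_k = Lⁱⁱ_k + cⁱ_k·Lⁱʲ_k` and symmetric inter-agent costs is a weighted constrained
potential dynamic game with weights `w¹_k = 1/c²_k` and `w²_k = 1/c¹_k`: the difference
of each agent's total cost under a unilateral change equals the corresponding weighted
sum of the potential's stage-cost differences. -/
theorem dyadic_weighted_potential_game
    (T : ℕ) (hT : 1 ≤ T) {X₁ U₁ X₂ U₂ : Type*}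
    (L11 : Fin T → X₁ × U₁ → ℝ) (L22 : Fin T → X₂ × U₂ → ℝ)
    (L12 : Fin T → X₁ × X₂ → ℝ) (L21 : Fin T → X₂ × X₁ → ℝ)
    (L11T : X₁ → ℝ) (L22T : X₂ → ℝ) (L12T : X₁ × X₂ → ℝ) (L21T : X₂ × X₁ → ℝ)
    (hsym : ∀ (k : Fin T) (x₁ : X₁) (x₂ : X₂), L21 k (x₂, x₁) = L12 k (x₁, x₂))
    (hsymT : ∀ (x₁ : X₁) (x₂ : X₂), L21T (x₂, x₁) = L12T (x₁, x₂))
    (c₁ c₂ : Fin (T + 1) → ℝ) (hc₁ : ∀ k, 0 < c₁ k) (hc₂ : ∀ k, 0 < c₂ k) :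
    -- total costs
    (∀ (J1 : (Fin (T + 1) → X₁) → (Fin (T + 1) → X₂) → (Fin T → U₁) → (Fin T → U₂) → ℝ),
      (∀ x1 x2 u1 u2, J1 x1 x2 u1 u2 =
        L11T (x1 (Fin.last T)) + c₁ (Fin.last T) * L12T (x1 (Fin.last T), x2 (Fin.last T))
          + ∑ k : Fin T, (L11 k (x1 k.castSucc, u1 k)
              + c₁ k.castSucc * L12 k (x1 k.castSucc, x2 k.castSucc))) →
      ∀ (L : Fin T → X₁ → X₂ → U₁ → U₂ → ℝ) (LT : X₁ → X₂ → ℝ),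
      (∀ k a b p q, L k a b p q =
        c₂ k.castSucc * L11 k (a, p) + c₁ k.castSucc * L22 k (b, q)
          + c₁ k.castSucc * c₂ k.castSucc * L12 k (a, b)) →
      (∀ a b, LT a b =
        c₂ (Fin.last T) * L11T a + c₁ (Fin.last T) * L22T b
          + c₁ (Fin.last T) * c₂ (Fin.last T) * L12T (a, b)) →
      -- agent 1's unilateral deviations
      (∀ (x1 x1' : Fin (T + 1) → X₁) (x2 : Fin (T + 1) → X₂)
          (u1 u1' : Fin T → U₁) (u2 : Fin T → U₂),
        J1 x1 x2 u1 u2 - J1 x1' x2 u1' u2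
          = (1 / c₂ (Fin.last T)) * (LT (x1 (Fin.last T)) (x2 (Fin.last T))
              - LT (x1' (Fin.last T)) (x2 (Fin.last T)))
            + ∑ k : Fin T, (1 / c₂ k.castSucc)
                * (L k (x1 k.castSucc) (x2 k.castSucc) (u1 k) (u2 k)
                   - L k (x1' k.castSucc) (x2 k.castSucc) (u1' k) (u2 k))))
    ∧
    (∀ (J2 : (Fin (T + 1) → X₁) → (Fin (T + 1) → X₂) → (Fin T → U₁) → (Fin T → U₂) → ℝ),
      (∀ x1 x2 u1 u2, J2 x1 x2 u1 u2 =
        L22T (x2 (Fin.last T)) + c₂ (Fin.last T) * L21T (x2 (Fin.last T), x1 (Fin.last T))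
          + ∑ k : Fin T, (L22 k (x2 k.castSucc, u2 k)
              + c₂ k.castSucc * L21 k (x2 k.castSucc, x1 k.castSucc))) →
      ∀ (L : Fin T → X₁ → X₂ → U₁ → U₂ → ℝ) (LT : X₁ → X₂ → ℝ),
      (∀ k a b p q, L k a b p q =
        c₂ k.castSucc * L11 k (a, p) + c₁ k.castSucc * L22 k (b, q)
          + c₁ k.castSucc * c₂ k.castSucc * L12 k (a, b)) →
      (∀ a b, LT a b =
        c₂ (Fin.last T) * L11T a + c₁ (Fin.last T) * L22T b
          + c₁ (Fin.last T) * c₂ (Fin.last T) * L12T (a, b)) →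
      -- agent 2's unilateral deviations
      (∀ (x1 : Fin (T + 1) → X₁) (x2 x2' : Fin (T + 1) → X₂)
          (u1 : Fin T → U₁) (u2 u2' : Fin T → U₂),
        J2 x1 x2 u1 u2 - J2 x1 x2' u1 u2'
          = (1 / c₁ (Fin.last T)) * (LT (x1 (Fin.last T)) (x2 (Fin.last T))
              - LT (x1 (Fin.last T)) (x2' (Fin.last T)))
            + ∑ k : Fin T, (1 / c₁ k.castSucc)
                * (L k (x1 k.castSucc) (x2 k.castSucc) (u1 k) (u2 k)
                   - L k (x1 k.castSucc) (x2' k.castSucc) (u1 k) (u2' k)))) :=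
  dyadic_weighted_potential_game_general T L11 L22 L12 L21 L11T L22T L12T L21T hsym hsymT c₁ c₂ hc₁
    hc₂
end

section
/- Fix N ≥ 1 and for each i ∈ Fin N types X_i (states) and U_i (actions). Let L^{ii} : X_i × U_i → ℝ for each i, let L^{ij} : X_i × X_j → ℝ for each pair i ≠ j with the symmetry L^{ij}(a,b) = L^{ji}(b,a), and let c_i > 0 be real numbers. Define agent i's stage cost L^i(x,u) = L^{ii}(x_i,u_i) + c_i·Σ_{j≠i} L^{ij}(x_i,x_j), the weight w_i = 1/Π_{j≠i} c_j, and the potential stage cost L(x,u) = Σ_i (Π_{j≠i} c_j)·L^{ii}(x_i,u_i) + (Π_l c_l)·Σ_{i<j} L^{ij}(x_i,x_j). Then for every i ∈ Fin N there exists a function Θ_i of the tuple ((x_j,u_j))_{j≠i} such that L^i(x,u) = w_i·L(x,u) + Θ_i((x_j)_{j≠i},(u_j)_{j≠i}) for all x ∈ Π_j X_j and u ∈ Π_j U_j. -/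
/-!
With `P = ∏_{j ≠ i} c j` we have `∏_l c l = c i * P`. Splitting off agent `i`, the potential
stage cost is `P * Lii i + (c i * P) * ∑_{j ≠ i} Lij i j` (the pairs `(l, i)` with `l < i` are
turned around by the symmetry of `Lij`) plus terms in which agent `i` does not occur;
scaled by `1 / P`, the first part is agent `i`'s stage cost, and `Θ` is minus `1 / P` times
the rest.
-/

open Finset

theorem Finset.sum_sum_filter_lt_insert {ι M : Type*} [LinearOrder ι] [AddCommMonoid M]
    {a : ι} {s : Finset ι} (ha : a ∉ s) (F : ι → ι → M) (hF : ∀ j, F j a = F a j) :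
    ∑ l ∈ insert a s, ∑ j ∈ (insert a s).filter (l < ·), F l j
      = ∑ l ∈ s, ∑ j ∈ s.filter (l < ·), F l j + ∑ j ∈ s, F a j := by
  have hinsert (l : ι) (hl : l ∈ s) :
      ∑ j ∈ (insert a s).filter (l < ·), F l j
        = ∑ j ∈ s.filter (l < ·), F l j + if l < a then F a l else 0 := by
    rw [filter_insert]
    split_ifs
    · rw [sum_insert (fun h => ha (mem_filter.1 h).1), hF, add_comm]
    · rw [add_zero]
  have hpart : ∑ j ∈ s.filter (a < ·), F a j + ∑ l ∈ s, (if l < a then F a l else 0)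
      = ∑ j ∈ s, F a j := by
    rw [← sum_filter, ← sum_filter_add_sum_filter_not s (a < ·)]
    congr 2
    refine filter_congr fun j hj => ?_
    exact ⟨fun h => h.not_gt, fun h => (not_lt.1 h).lt_of_ne (ne_of_mem_of_not_mem hj ha)⟩
  rw [sum_insert ha, filter_insert, if_neg (lt_irrefl a), sum_congr rfl hinsert,
    sum_add_distrib, ← hpart]
  abel

theorem multiagent_own_coefficient_stagewise_decomposition_general
    {N : ℕ}
    (X U : Fin N → Type*)
    (Lii : ∀ i : Fin N, X i × U i → ℝ)
    (Lij : ∀ i j : Fin N, X i × X j → ℝ)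
    (hsym : ∀ (i j : Fin N), i ≠ j → ∀ (a : X i) (b : X j), Lij i j (a, b) = Lij j i (b, a))
    (c : Fin N → ℝ) (hc : ∀ i, 0 < c i) :
    ∀ i : Fin N,
      ∃ Θ : ((j : {j : Fin N // j ≠ i}) → X j.1) → ((j : {j : Fin N // j ≠ i}) → U j.1) → ℝ,
        ∀ (x : ∀ j, X j) (u : ∀ j, U j),
          Lii i (x i, u i) + c i * ∑ j ∈ Finset.univ.erase i, Lij i j (x i, x j)
            = (1 / ∏ j ∈ Finset.univ.erase i, c j)
                * (∑ l : Fin N, (∏ j ∈ Finset.univ.erase l, c j) * Lii l (x l, u l)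
                   + (∏ l : Fin N, c l)
                       * ∑ l : Fin N, ∑ j ∈ Finset.univ.filter (fun j => l < j),
                           Lij l j (x l, x j))
              + Θ (fun j => x j.1) (fun j => u j.1) := by
  intro i
  set P := ∏ j ∈ univ.erase i, c j
  have hP : P ≠ 0 := (prod_pos fun j _ => hc j).ne'
  have hC : ∏ l, c l = c i * P := (mul_prod_erase univ c (mem_univ i)).symm
  have hmem (j : Fin N) : j ∈ univ.erase i ↔ j ≠ i := by simp
  refine ⟨fun xr ur => -(1 / P) *
      (∑ l : {j // j ≠ i}, (∏ j ∈ univ.erase l.1, c j) * Lii l (xr l, ur l)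
        + c i * P * ∑ l : {j // j ≠ i}, ∑ j : {j // j ≠ i},
            if l.1 < j.1 then Lij l j (xr l, xr j) else 0), fun x u => ?_⟩
  have hdiag : ∑ l : {j // j ≠ i}, (∏ j ∈ univ.erase l.1, c j) * Lii l (x l, u l)
      = ∑ l ∈ univ.erase i, (∏ j ∈ univ.erase l, c j) * Lii l (x l, u l) := by
    rw [sum_subtype _ hmem]
  have hpairs : ∑ l : {j // j ≠ i}, ∑ j : {j // j ≠ i},
        (if l.1 < j.1 then Lij l j (x l, x j) else 0)
      = ∑ l ∈ univ.erase i, ∑ j ∈ (univ.erase i).filter (l < ·), Lij l j (x l, x j) := by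
    rw [sum_subtype _ hmem]
    refine sum_congr rfl fun l _ => ?_
    rw [sum_filter, sum_subtype _ hmem]
  have hsym_i (j : Fin N) : Lij j i (x j, x i) = Lij i j (x i, x j) := by
    rcases eq_or_ne j i with rfl | hji
    · rfl
    · exact hsym j i hji _ _
  have hsplit := sum_sum_filter_lt_insert (notMem_erase i univ)
    (fun l j => Lij l j (x l, x j)) hsym_i
  rw [insert_erase (mem_univ i)] at hsplit
  beta_reduce
  rw [hdiag, hpairs, hC, hsplit, ← add_sum_erase univ _ (mem_univ i)]
  field_simp
  ring

/-- stage-wise decomposition underlying Lemma 4 of the paper: when each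
agent `i` applies the same positive coefficient `c i` to its inter-agent costs with all
other agents, and inter-agent costs are symmetric, each agent's stage cost equals
`w i = 1/∏_{j≠i} c j` times a common potential stage cost plus a term independent of
the agent's own state and action. -/
theorem multiagent_own_coefficient_stagewise_decomposition
    {N : ℕ} (hN : 1 ≤ N)
    (X U : Fin N → Type*)
    (Lii : ∀ i : Fin N, X i × U i → ℝ)
    (Lij : ∀ i j : Fin N, X i × X j → ℝ)
    (hsym : ∀ (i j : Fin N), i ≠ j → ∀ (a : X i) (b : X j), Lij i j (a, b) = Lij j i (b, a))
    (c : Fin N → ℝ) (hc : ∀ i, 0 < c i) :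
    ∀ i : Fin N,
      ∃ Θ : ((j : {j : Fin N // j ≠ i}) → X j.1) → ((j : {j : Fin N // j ≠ i}) → U j.1) → ℝ,
        ∀ (x : ∀ j, X j) (u : ∀ j, U j),
          Lii i (x i, u i) + c i * ∑ j ∈ Finset.univ.erase i, Lij i j (x i, x j)
            = (1 / ∏ j ∈ Finset.univ.erase i, c j)
                * (∑ l : Fin N, (∏ j ∈ Finset.univ.erase l, c j) * Lii l (x l, u l)
                   + (∏ l : Fin N, c l)
                       * ∑ l : Fin N, ∑ j ∈ Finset.univ.filter (fun j => l < j),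
                           Lij l j (x l, x j))
              + Θ (fun j => x j.1) (fun j => u j.1) :=
  multiagent_own_coefficient_stagewise_decomposition_general X U Lii Lij hsym c hc
end

section
/- Fix N ≥ 1, T ≥ 1, and for each i ∈ Fin N types X_i and U_i. For each time step k ∈ {0,…,T−1} let L^{ii}_k : X_i × U_i → ℝ and L^{ij}_k : X_i × X_j → ℝ (i ≠ j) with L^{ij}_k(a,b) = L^{ji}_k(b,a), and for k = T let L^{ii}_T : X_i → ℝ and L^{ij}_T : X_i × X_j → ℝ with L^{ij}_T(a,b) = L^{ji}_T(b,a); let c^i_k > 0 for all i and all k ∈ {0,…,T}. Define agent i's total cost J^i of a trajectory ((x_k)_{k≤T},(u_k)_{k<T}) with x_k ∈ Π_j X_j, u_k ∈ Π_j U_j as L^{ii}_T(x_T(i)) + c^i_T·Σ_{j≠i} L^{ij}_T(x_T(i),x_T(j)) + Σ_{k<T}[L^{ii}_k(x_k(i),u_k(i)) + c^i_k·Σ_{j≠i} L^{ij}_k(x_k(i),x_k(j))], and define the potential stage costs L_k(x,u) = Σ_i (Π_{j≠i} c^j_k)·L^{ii}_k(x(i),u(i)) + (Π_l c^l_k)·Σ_{i<j}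 L^{ij}_k(x(i),x(j)) with the analogous terminal L_T. Then for every i and any two trajectories that agree in all components of every player j ≠ i at every time step, J^i evaluated at the first trajectory minus J^i at the second equals w^i_T·(L_T difference) + Σ_{k<T} w^i_k·(L_k difference), where w^i_k = 1/Π_{j≠i} c^j_k. -/
/-! Only agent `i`'s own cost and the couplings `Lⁱʲ = Lʲⁱ` involving `i` change when agent `i`
deviates alone. In the potential, the coupling between `i` and `j` appears once, inside the
pairwise sum, with coefficient `∏ₗ cˡ = cⁱ · ∏_{j≠i} cʲ`, and agent `i`'s own cost appears with
coefficient `∏_{j≠i} cʲ`; dividing by `∏_{j≠i} cʲ` recovers exactly the change of `Jⁱ`, stage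
by stage. -/

open Finset

section PairSum

variable {ι M : Type*} [Fintype ι] [DecidableEq ι] [LinearOrder ι] [AddCommMonoid M]

theorem sum_sum_filter_lt_eq_sum_erase (i : ι) (D : ι → ι → M)
    (hzero : ∀ l j, l ≠ i → j ≠ i → D l j = 0) (hsymm : ∀ l j, l ≠ j → D l j = D j l) :
    ∑ l, ∑ j ∈ univ.filter (fun j => l < j), D l j = ∑ j ∈ univ.erase i, D i j := by
  have hrow : ∀ l ∈ univ.erase i,
      ∑ j ∈ univ.filter (fun j => l < j), D l j = if l < i then D i l else 0 := by
    intro l hl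
    have hli : l ≠ i := ne_of_mem_erase hl
    rw [sum_filter, sum_eq_single i (fun j _ hj => by simp [hzero l j hli hj]) (by simp)]
    split_ifs <;> simp [hsymm l i hli]
  have hsplit : ∑ j ∈ univ.erase i, D i j
      = ∑ j, (if i < j then D i j else 0) + ∑ j, if j < i then D i j else 0 := by
    rw [← sum_add_distrib, ← sum_erase univ (a := i) (by simp)]
    refine sum_congr rfl fun j hj => ?_
    rcases (ne_of_mem_erase hj).lt_or_gt with h | h <;> simp [h, h.not_gt]
  rw [← sum_erase_add _ _ (mem_univ i), sum_congr rfl hrow, sum_erase _ (by simp), hsplit,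
    sum_filter, add_comm]

end PairSum

section StageCost

variable {ι : Type*} [Fintype ι] [DecidableEq ι]

/-- `A l` and `B l j` stand for `Lˡˡ_k` and `Lˡʲ_k` evaluated along a trajectory at one stage `k`. -/
def agentStageCost (c A : ι → ℝ) (B : ι → ι → ℝ) (i : ι) : ℝ :=
  A i + c i * ∑ j ∈ univ.erase i, B i j

variable [LinearOrder ι]

def potentialStageCost (c A : ι → ℝ) (B : ι → ι → ℝ) : ℝ :=
  ∑ l, (∏ j ∈ univ.erase l, c j) * A l
    + (∏ l, c l) * ∑ l, ∑ j ∈ univ.filter (fun j => l < j), B l j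

theorem agentStageCost_sub_eq_div_mul_potentialStageCost_sub (i : ι) (c A A' : ι → ℝ)
    (B B' : ι → ι → ℝ) (hc : ∏ j ∈ univ.erase i, c j ≠ 0)
    (hA : ∀ j, j ≠ i → A j = A' j) (hB : ∀ l j, l ≠ i → j ≠ i → B l j = B' l j)
    (hBsymm : ∀ l j, l ≠ j → B l j = B j l) (hB'symm : ∀ l j, l ≠ j → B' l j = B' j l) :
    agentStageCost c A B i - agentStageCost c A' B' i
      = (1 / ∏ j ∈ univ.erase i, c j)
          * (potentialStageCost c A B - potentialStageCost c A' B') := by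
  set P := ∏ j ∈ univ.erase i, c j
  have hown : ∑ l, (∏ j ∈ univ.erase l, c j) * A l - ∑ l, (∏ j ∈ univ.erase l, c j) * A' l
      = P * (A i - A' i) := by
    rw [← sum_sub_distrib, sum_eq_single i (fun l _ hl => by rw [hA l hl, sub_self]) (by simp),
      mul_sub]
  have hpair : ∑ l, ∑ j ∈ univ.filter (fun j => l < j), B l j
        - ∑ l, ∑ j ∈ univ.filter (fun j => l < j), B' l j
      = ∑ j ∈ univ.erase i, B i j - ∑ j ∈ univ.erase i, B' i j := by
    simp only [← sum_sub_distrib]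
    exact sum_sum_filter_lt_eq_sum_erase i (fun l j => B l j - B' l j)
      (fun l j hl hj => by rw [hB l j hl hj, sub_self])
      (fun l j hlj => by rw [hBsymm l j hlj, hB'symm l j hlj])
  have hprod : ∏ l, c l = c i * P := (mul_prod_erase univ c (mem_univ i)).symm
  unfold agentStageCost potentialStageCost
  rw [add_sub_add_comm, add_sub_add_comm, ← mul_sub, ← mul_sub, hown, hpair, hprod]
  field_simp

end StageCost

theorem add_sum_sub_add_sum_eq {ι G : Type*} [AddCommGroup G] (s : Finset ι) {a a' d : G}
    {f f' g : ι → G} (h : a - a' = d) (hf : ∀ k ∈ s, f k - f' k = g k) :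
    (a + ∑ k ∈ s, f k) - (a' + ∑ k ∈ s, f' k) = d + ∑ k ∈ s, g k := by
  rw [add_sub_add_comm, ← sum_sub_distrib, h, sum_congr rfl hf]

theorem multiagent_own_coefficient_weighted_potential_game_general
    {N : ℕ} (T : ℕ)
    (X U : Fin N → Type*)
    (Lii : Fin T → ∀ i : Fin N, X i × U i → ℝ)
    (Lij : Fin T → ∀ i j : Fin N, X i × X j → ℝ)
    (LiiT : ∀ i : Fin N, X i → ℝ)
    (LijT : ∀ i j : Fin N, X i × X j → ℝ)
    (hsym : ∀ (k : Fin T) (i j : Fin N), i ≠ j → ∀ (a : X i) (b : X j),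
      Lij k i j (a, b) = Lij k j i (b, a))
    (hsymT : ∀ (i j : Fin N), i ≠ j → ∀ (a : X i) (b : X j),
      LijT i j (a, b) = LijT j i (b, a))
    (c : Fin (N) → Fin (T + 1) → ℝ) (hc : ∀ i k, 0 < c i k) :
    ∀ i : Fin N,
      ∀ (x x' : Fin (T + 1) → ∀ j, X j) (u u' : Fin T → ∀ j, U j),
        (∀ (k : Fin (T + 1)) (j : Fin N), j ≠ i → x k j = x' k j) →
        (∀ (k : Fin T) (j : Fin N), j ≠ i → u k j = u' k j) →
        -- Jⁱ at the first trajectory minus Jⁱ at the second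
        (LiiT i (x (Fin.last T) i)
            + c i (Fin.last T)
                * ∑ j ∈ Finset.univ.erase i, LijT i j (x (Fin.last T) i, x (Fin.last T) j)
            + ∑ k : Fin T, (Lii k i (x k.castSucc i, u k i)
                + c i k.castSucc
                    * ∑ j ∈ Finset.univ.erase i, Lij k i j (x k.castSucc i, x k.castSucc j)))
          - (LiiT i (x' (Fin.last T) i)
            + c i (Fin.last T)
                * ∑ j ∈ Finset.univ.erase i, LijT i j (x' (Fin.last T) i, x' (Fin.last T) j)
            + ∑ k : Fin T, (Lii k i (x' k.castSucc i, u' k i)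
                + c i k.castSucc
                    * ∑ j ∈ Finset.univ.erase i, Lij k i j (x' k.castSucc i, x' k.castSucc j)))
        = (1 / ∏ j ∈ Finset.univ.erase i, c j (Fin.last T))
            * ((∑ l : Fin N, (∏ j ∈ Finset.univ.erase l, c j (Fin.last T))
                    * LiiT l (x (Fin.last T) l)
                + (∏ l : Fin N, c l (Fin.last T))
                    * ∑ l : Fin N, ∑ j ∈ Finset.univ.filter (fun j => l < j),
                        LijT l j (x (Fin.last T) l, x (Fin.last T) j))
              - (∑ l : Fin N, (∏ j ∈ Finset.univ.erase l, c j (Fin.last T))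
                    * LiiT l (x' (Fin.last T) l)
                + (∏ l : Fin N, c l (Fin.last T))
                    * ∑ l : Fin N, ∑ j ∈ Finset.univ.filter (fun j => l < j),
                        LijT l j (x' (Fin.last T) l, x' (Fin.last T) j)))
          + ∑ k : Fin T, (1 / ∏ j ∈ Finset.univ.erase i, c j k.castSucc)
              * ((∑ l : Fin N, (∏ j ∈ Finset.univ.erase l, c j k.castSucc)
                      * Lii k l (x k.castSucc l, u k l)
                  + (∏ l : Fin N, c l k.castSucc)
                      * ∑ l : Fin N, ∑ j ∈ Finset.univ.filter (fun j => l < j),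
                          Lij k l j (x k.castSucc l, x k.castSucc j))
                - (∑ l : Fin N, (∏ j ∈ Finset.univ.erase l, c j k.castSucc)
                      * Lii k l (x' k.castSucc l, u' k l)
                  + (∏ l : Fin N, c l k.castSucc)
                      * ∑ l : Fin N, ∑ j ∈ Finset.univ.filter (fun j => l < j),
                          Lij k l j (x' k.castSucc l, x' k.castSucc j))) := by
  intro i x x' u u' hx hu
  have hprod : ∀ t, ∏ j ∈ univ.erase i, c j t ≠ 0 := fun t => (prod_pos fun j _ => hc j t).ne'
  have hterminal := agentStageCost_sub_eq_div_mul_potentialStageCost_sub i (c · (Fin.last T))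
    (fun l => LiiT l (x (Fin.last T) l)) (fun l => LiiT l (x' (Fin.last T) l))
    (fun l j => LijT l j (x (Fin.last T) l, x (Fin.last T) j))
    (fun l j => LijT l j (x' (Fin.last T) l, x' (Fin.last T) j)) (hprod _)
    (fun j hj => by rw [hx _ j hj]) (fun l j hl hj => by rw [hx _ l hl, hx _ j hj])
    (fun l j hlj => hsymT l j hlj _ _) (fun l j hlj => hsymT l j hlj _ _)
  have hrunning := fun k : Fin T =>
    agentStageCost_sub_eq_div_mul_potentialStageCost_sub i (c · k.castSucc)
      (fun l => Lii k l (x k.castSucc l, u k l)) (fun l => Lii k l (x' k.castSucc l, u' k l))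
      (fun l j => Lij k l j (x k.castSucc l, x k.castSucc j))
      (fun l j => Lij k l j (x' k.castSucc l, x' k.castSucc j)) (hprod _)
      (fun j hj => by rw [hx _ j hj, hu k j hj]) (fun l j hl hj => by rw [hx _ l hl, hx _ j hj])
      (fun l j hlj => hsym k l j hlj _ _) (fun l j hlj => hsym k l j hlj _ _)
  exact add_sum_sub_add_sum_eq univ hterminal fun k _ => hrunning k

/-- Lemma 4 of the paper: a multi-agent interaction in which each agent
`i` treats all other agents with the same coefficient `cⁱ_k` and the inter-agent costs
are symmetric is a weighted potential dynamic game with weights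
`wⁱ_k = 1/∏_{j≠i} cʲ_k`. -/
theorem multiagent_own_coefficient_weighted_potential_game
    {N : ℕ} (hN : 1 ≤ N) (T : ℕ) (hT : 1 ≤ T)
    (X U : Fin N → Type*)
    (Lii : Fin T → ∀ i : Fin N, X i × U i → ℝ)
    (Lij : Fin T → ∀ i j : Fin N, X i × X j → ℝ)
    (LiiT : ∀ i : Fin N, X i → ℝ)
    (LijT : ∀ i j : Fin N, X i × X j → ℝ)
    (hsym : ∀ (k : Fin T) (i j : Fin N), i ≠ j → ∀ (a : X i) (b : X j),
      Lij k i j (a, b) = Lij k j i (b, a))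
    (hsymT : ∀ (i j : Fin N), i ≠ j → ∀ (a : X i) (b : X j),
      LijT i j (a, b) = LijT j i (b, a))
    (c : Fin (N) → Fin (T + 1) → ℝ) (hc : ∀ i k, 0 < c i k) :
    ∀ i : Fin N,
      ∀ (x x' : Fin (T + 1) → ∀ j, X j) (u u' : Fin T → ∀ j, U j),
        (∀ (k : Fin (T + 1)) (j : Fin N), j ≠ i → x k j = x' k j) →
        (∀ (k : Fin T) (j : Fin N), j ≠ i → u k j = u' k j) →
        -- Jⁱ at the first trajectory minus Jⁱ at the second
        (LiiT i (x (Fin.last T) i)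
            + c i (Fin.last T)
                * ∑ j ∈ Finset.univ.erase i, LijT i j (x (Fin.last T) i, x (Fin.last T) j)
            + ∑ k : Fin T, (Lii k i (x k.castSucc i, u k i)
                + c i k.castSucc
                    * ∑ j ∈ Finset.univ.erase i, Lij k i j (x k.castSucc i, x k.castSucc j)))
          - (LiiT i (x' (Fin.last T) i)
            + c i (Fin.last T)
                * ∑ j ∈ Finset.univ.erase i, LijT i j (x' (Fin.last T) i, x' (Fin.last T) j)
            + ∑ k : Fin T, (Lii k i (x' k.castSucc i, u' k i)
                + c i k.castSucc
                    * ∑ j ∈ Finset.univ.erase i, Lij k i j (x' k.castSucc i, x' k.castSucc j)))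
        = (1 / ∏ j ∈ Finset.univ.erase i, c j (Fin.last T))
            * ((∑ l : Fin N, (∏ j ∈ Finset.univ.erase l, c j (Fin.last T))
                    * LiiT l (x (Fin.last T) l)
                + (∏ l : Fin N, c l (Fin.last T))
                    * ∑ l : Fin N, ∑ j ∈ Finset.univ.filter (fun j => l < j),
                        LijT l j (x (Fin.last T) l, x (Fin.last T) j))
              - (∑ l : Fin N, (∏ j ∈ Finset.univ.erase l, c j (Fin.last T))
                    * LiiT l (x' (Fin.last T) l)
                + (∏ l : Fin N, c l (Fin.last T))
                    * ∑ l : Fin N, ∑ j ∈ Finset.univ.filter (fun j => l < j),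
                        LijT l j (x' (Fin.last T) l, x' (Fin.last T) j)))
          + ∑ k : Fin T, (1 / ∏ j ∈ Finset.univ.erase i, c j k.castSucc)
              * ((∑ l : Fin N, (∏ j ∈ Finset.univ.erase l, c j k.castSucc)
                      * Lii k l (x k.castSucc l, u k l)
                  + (∏ l : Fin N, c l k.castSucc)
                      * ∑ l : Fin N, ∑ j ∈ Finset.univ.filter (fun j => l < j),
                          Lij k l j (x k.castSucc l, x k.castSucc j))
                - (∑ l : Fin N, (∏ j ∈ Finset.univ.erase l, c j k.castSucc)
                      * Lii k l (x' k.castSucc l, u' k l)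
                  + (∏ l : Fin N, c l k.castSucc)
                      * ∑ l : Fin N, ∑ j ∈ Finset.univ.filter (fun j => l < j),
                          Lij k l j (x' k.castSucc l, x' k.castSucc j))) :=
  multiagent_own_coefficient_weighted_potential_game_general T X U Lii Lij LiiT LijT hsym hsymT c hc
end

section
/- Fix N ≥ 1 and for each i ∈ Fin N types X_i (states) and U_i (actions). Let L^{ii} : X_i × U_i → ℝ for each i, let L^{ij} : X_i × X_j → ℝ for each pair i ≠ j with the symmetry L^{ij}(a,b) = L^{ji}(b,a), and let c_i > 0 be real numbers. Define agent i's stage cost L^i(x,u) = L^{ii}(x_i,u_i) + Σ_{j≠i} c_j·L^{ij}(x_i,x_j) and the potential stage cost L(x,u) = Σ_i c_i·L^{ii}(x_i,u_i) + Σ_{i<j} c_i·c_j·L^{ij}(x_i,x_j). Then for every i ∈ Fin N there exists a function Θ_i of the tuple ((x_j,u_j))_{j≠i} such that L^i(x,u) = (1/c_i)·L(x,u) + Θ_i((x_j)_{j≠i},(u_j)_{j≠i}) for all x ∈ Π_j X_j and u ∈ Π_j U_j. -/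
/-! Collecting in the potential stage cost `L` every term that involves agent `i` gives
`c i * Lii i + ∑_{j > i} c i c j Lij i j + ∑_{l < i} c l c i Lij l i`; by the symmetry of the
inter-agent costs the last two sums merge into `c i * ∑_{j ≠ i} c j Lij i j`, so
`L = c i * Lⁱ + R` with `R` built from the agents other than `i` alone, and `Θ = -R / c i`. -/

open Finset

theorem Finset.sum_lt_pairs_eq_sum_ne_add {ι M : Type*} [Fintype ι] [LinearOrder ι]
    [AddCommMonoid M] (g : ι → ι → M) (hg : ∀ l j, l ≠ j → g l j = g j l) (i : ι) :
    ∑ l, ∑ j ∈ univ.filter (fun j => l < j), g l j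
      = ∑ j : {j // j ≠ i}, g i j
        + ∑ l : {l // l ≠ i}, ∑ j ∈ univ.filter (fun j : {j // j ≠ i} => l.1 < j.1), g l j := by
  have hcross : ∀ j : {j // j ≠ i},
      ((if i < j.1 then g i j else 0) + if j.1 < i then g j i else 0) = g i j := by
    rintro ⟨j, hj⟩
    rcases hj.lt_or_gt with hji | hij
    · simp [hji, hji.not_gt, hg j i hj]
    · simp [hij, hij.not_gt]
  have hsplit : ∀ l, ∑ j, (if l < j then g l j else 0)
      = (if l < i then g l i else 0) + ∑ j : {j // j ≠ i}, if l < j.1 then g l j else 0 :=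
    fun l => Fintype.sum_eq_add_sum_subtype_ne _ i
  simp only [sum_filter]
  rw [Fintype.sum_eq_add_sum_subtype_ne _ i, hsplit i]
  simp only [hsplit, sum_add_distrib, lt_irrefl, if_false, zero_add, ← add_assoc]
  rw [← sum_add_distrib, sum_congr rfl fun j _ => hcross j]

theorem multiagent_other_coefficient_stagewise_decomposition_general
    {N : ℕ}
    (X U : Fin N → Type*)
    (Lii : ∀ i : Fin N, X i × U i → ℝ)
    (Lij : ∀ i j : Fin N, X i × X j → ℝ)
    (hsym : ∀ (i j : Fin N), i ≠ j → ∀ (a : X i) (b : X j), Lij i j (a, b) = Lij j i (b, a))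
    (c : Fin N → ℝ) (hc : ∀ i, 0 < c i) :
    ∀ i : Fin N,
      ∃ Θ : ((j : {j : Fin N // j ≠ i}) → X j.1) → ((j : {j : Fin N // j ≠ i}) → U j.1) → ℝ,
        ∀ (x : ∀ j, X j) (u : ∀ j, U j),
          Lii i (x i, u i) + ∑ j ∈ Finset.univ.erase i, c j * Lij i j (x i, x j)
            = (1 / c i)
                * (∑ l : Fin N, c l * Lii l (x l, u l)
                   + ∑ l : Fin N, ∑ j ∈ Finset.univ.filter (fun j => l < j),
                       c l * c j * Lij l j (x l, x j))
              + Θ (fun j => x j.1) (fun j => u j.1) := by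
  intro i
  refine ⟨fun xo uo => -(1 / c i) * (∑ l : {l // l ≠ i}, c l * Lii l (xo l, uo l)
    + ∑ l : {l // l ≠ i}, ∑ j ∈ univ.filter (fun j : {j // j ≠ i} => l.1 < j.1),
        c l * c j * Lij l j (xo l, xo j)), fun x u => ?_⟩
  have hpairs := sum_lt_pairs_eq_sum_ne_add (fun l j => c l * c j * Lij l j (x l, x j))
    (fun l j hlj => by simp only [hsym l j hlj, mul_comm (c l)]) i
  rw [Fintype.sum_eq_add_sum_subtype_ne _ i, hpairs,
    sum_subtype (p := (· ≠ i)) (univ.erase i) (fun j => by simp)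
      (fun j => c j * Lij i j (x i, x j))]
  have hci : c i ≠ 0 := (hc i).ne'
  simp only [mul_assoc (c i), ← mul_sum]
  field_simp
  ring

/-- stage-wise decomposition underlying Lemma 5 of the paper: when every
agent treats agent `j` with the same positive coefficient `c j`, and inter-agent costs
are symmetric, each agent's stage cost equals `(1/c i)` times a common potential stage
cost plus a term independent of the agent's own state and action. -/
theorem multiagent_other_coefficient_stagewise_decomposition
    {N : ℕ} (hN : 1 ≤ N)
    (X U : Fin N → Type*)
    (Lii : ∀ i : Fin N, X i × U i → ℝ)
    (Lij : ∀ i j : Fin N, X i × X j → ℝ)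
    (hsym : ∀ (i j : Fin N), i ≠ j → ∀ (a : X i) (b : X j), Lij i j (a, b) = Lij j i (b, a))
    (c : Fin N → ℝ) (hc : ∀ i, 0 < c i) :
    ∀ i : Fin N,
      ∃ Θ : ((j : {j : Fin N // j ≠ i}) → X j.1) → ((j : {j : Fin N // j ≠ i}) → U j.1) → ℝ,
        ∀ (x : ∀ j, X j) (u : ∀ j, U j),
          Lii i (x i, u i) + ∑ j ∈ Finset.univ.erase i, c j * Lij i j (x i, x j)
            = (1 / c i)
                * (∑ l : Fin N, c l * Lii l (x l, u l)
                   + ∑ l : Fin N, ∑ j ∈ Finset.univ.filter (fun j => l < j),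
                       c l * c j * Lij l j (x l, x j))
              + Θ (fun j => x j.1) (fun j => u j.1) :=
  multiagent_other_coefficient_stagewise_decomposition_general X U Lii Lij hsym c hc
end

section
/- Let Γ₁ and Γ₂ be strategy sets, let F be a feasibility predicate on Γ₁ × Γ₂, let A : Γ₁ → ℝ, C : Γ₂ → ℝ, B : Γ₁ × Γ₂ → ℝ, and let c₁ > 0 and c₂ > 0 be real numbers. Define J¹(γ₁,γ₂) = A(γ₁) + c₁·B(γ₁,γ₂), J²(γ₁,γ₂) = C(γ₂) + c₂·B(γ₁,γ₂), and P(γ₁,γ₂) = c₂·A(γ₁) + c₁·C(γ₂) + c₁·c₂·B(γ₁,γ₂). Then every feasible (γ₁*,γ₂*) satisfying P(γ₁*,γ₂*) ≤ P(γ₁,γ₂) for all feasible (γ₁,γ₂) is a generalized Nash equilibrium: for every γ'₁ with (γ'₁,γ₂*) feasible, J¹(γ₁*,γ₂*) ≤ J¹(γ'₁,γ₂*), and for every γ'₂ with (γ₁*,γ'₂) feasible, J²(γ₁*,γ₂*) ≤ J²(γ₁*,γ'₂). -/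
/-! `P` is a weighted potential of the game: a unilateral deviation of player 1 changes `P` by
`c₂` times the change of `J¹`, and one of player 2 by `c₁` times the change of `J²`. A feasible
unilateral deviation from a minimizer of `P` cannot lower `P`, so, the weights being positive,
it cannot lower the deviating player's cost either. -/

section TwoPlayerGame

variable {Γ₁ Γ₂ : Type*}

def IsGeneralizedNashEquilibrium (F : Γ₁ × Γ₂ → Prop) (J₁ J₂ : Γ₁ × Γ₂ → ℝ) (x : Γ₁ × Γ₂) :
    Prop :=
  F x ∧ (∀ x₁, F (x₁, x.2) → J₁ x ≤ J₁ (x₁, x.2)) ∧ (∀ x₂, F (x.1, x₂) → J₂ x ≤ J₂ (x.1, x₂))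

def IsWeightedPotential (J₁ J₂ P : Γ₁ × Γ₂ → ℝ) (w₁ w₂ : ℝ) : Prop :=
  (∀ x₁ x₁' x₂, P (x₁', x₂) - P (x₁, x₂) = w₁ * (J₁ (x₁', x₂) - J₁ (x₁, x₂))) ∧
    ∀ x₁ x₂ x₂', P (x₁, x₂') - P (x₁, x₂) = w₂ * (J₂ (x₁, x₂') - J₂ (x₁, x₂))

theorem le_of_mul_sub_nonneg {w a b : ℝ} (hw : 0 < w) (h : 0 ≤ w * (b - a)) : a ≤ b :=
  sub_nonneg.1 (nonneg_of_mul_nonneg_right h hw)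

theorem IsWeightedPotential.isGeneralizedNashEquilibrium_of_isMinOn
    {F : Γ₁ × Γ₂ → Prop} {J₁ J₂ P : Γ₁ × Γ₂ → ℝ} {w₁ w₂ : ℝ} (hP : IsWeightedPotential J₁ J₂ P w₁ w₂)
    (hw₁ : 0 < w₁) (hw₂ : 0 < w₂) {x : Γ₁ × Γ₂} (hx : F x) (hmin : IsMinOn P {y | F y} x) :
    IsGeneralizedNashEquilibrium F J₁ J₂ x := by
  rw [isMinOn_iff] at hmin
  refine ⟨hx, fun x₁ hx₁ => ?_, fun x₂ hx₂ => ?_⟩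
  · refine le_of_mul_sub_nonneg hw₁ ?_
    rw [← hP.1]
    exact sub_nonneg.2 (hmin _ hx₁)
  · refine le_of_mul_sub_nonneg hw₂ ?_
    rw [← hP.2]
    exact sub_nonneg.2 (hmin _ hx₂)

end TwoPlayerGame

theorem isWeightedPotential_dyadic {Γ₁ Γ₂ : Type*} (A : Γ₁ → ℝ) (C : Γ₂ → ℝ) (B : Γ₁ × Γ₂ → ℝ)
    (c₁ c₂ : ℝ) :
    IsWeightedPotential (fun x => A x.1 + c₁ * B x) (fun x => C x.2 + c₂ * B x)
      (fun x => c₂ * A x.1 + c₁ * C x.2 + c₁ * c₂ * B x) c₂ c₁ :=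
  ⟨fun _ _ _ => by ring, fun _ _ _ => by ring⟩

/-- Lemma 3 + Theorem 1 of the paper, constant coefficients: in a dyadic
interaction with costs `J¹ = A + c₁·B` and `J² = C + c₂·B`, a feasible minimizer of the
potential `P = c₂·A + c₁·C + c₁·c₂·B` over the feasible set is a generalized Nash
equilibrium. -/
theorem dyadic_potential_minimizer_is_GNE
    {Γ₁ Γ₂ : Type*}
    (F : Γ₁ × Γ₂ → Prop)
    (A : Γ₁ → ℝ) (C : Γ₂ → ℝ) (B : Γ₁ × Γ₂ → ℝ)
    (c₁ c₂ : ℝ) (hc₁ : 0 < c₁) (hc₂ : 0 < c₂) :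
    ∀ (γ₁s : Γ₁) (γ₂s : Γ₂), F (γ₁s, γ₂s) →
      (∀ (γ₁ : Γ₁) (γ₂ : Γ₂), F (γ₁, γ₂) →
        c₂ * A γ₁s + c₁ * C γ₂s + c₁ * c₂ * B (γ₁s, γ₂s)
          ≤ c₂ * A γ₁ + c₁ * C γ₂ + c₁ * c₂ * B (γ₁, γ₂)) →
      (∀ γ₁' : Γ₁, F (γ₁', γ₂s) →
        A γ₁s + c₁ * B (γ₁s, γ₂s) ≤ A γ₁' + c₁ * B (γ₁', γ₂s))
      ∧ (∀ γ₂' : Γ₂, F (γ₁s, γ₂') →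
        C γ₂s + c₂ * B (γ₁s, γ₂s) ≤ C γ₂' + c₂ * B (γ₁s, γ₂')) := by
  intro γ₁s γ₂s hF hmin
  have hminOn : IsMinOn (fun x => c₂ * A x.1 + c₁ * C x.2 + c₁ * c₂ * B x) {x | F x} (γ₁s, γ₂s) :=
    isMinOn_iff.2 fun x hx => hmin x.1 x.2 hx
  exact ((isWeightedPotential_dyadic A C B c₁ c₂).isGeneralizedNashEquilibrium_of_isMinOn
    hc₂ hc₁ hF hminOn).2
end
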